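/- arXiv:2108.00531 — 2 statements merged into one kernel-verified Lean document; each statement's English description precedes it below -/
import Mathlib

section
/- If I is x-tight in [0,m] and J is x-tight in [0,n] in K[x,y], then IJ is x-tight in [0,m+n]. -/
/-- A monomial in `K[x_1,...,x_n]` is identified with its exponent vector. -/
abbrev Mon (n : ℕ) := Fin n → ℕ

/-- Total degree of a monomial. -/
def degree {n : ℕ} (u : Mon n) : ℕ := ∑ i, u i

/-- A monomial ideal is identified with the set of exponent vectors of the monomials it
contains; this set is closed under multiplication by monomials. -/
def IsMonomialIdeal {n : ℕ} (I : Set (Mon n)) : Prop :=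
  ∀ u ∈ I, ∀ w : Mon n, u + w ∈ I

/-- The minimal monomial generating set `G(I)` of a monomial ideal: monomials of `I`
minimal with respect to divisibility (pointwise `≤` of exponent vectors). -/
def minGens {n : ℕ} (I : Set (Mon n)) : Set (Mon n) :=
  {u | u ∈ I ∧ ∀ v ∈ I, v ≤ u → v = u}

/-- `exch v i j` is the exponent vector of `x_j * (v / x_i)` (for `i ≠ j`). -/
def exch {n : ℕ} (v : Mon n) (i j : Fin n) : Mon n :=
  fun k => if k = i then v k - 1 else if k = j then v k + 1 else v k

/-- `component I d` is the ideal `I_⟨d⟩` generated by the degree-`d` monomials of `I`. -/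
def component {n : ℕ} (I : Set (Mon n)) (d : ℕ) : Set (Mon n) :=
  {w | ∃ u ∈ I, degree u = d ∧ u ≤ w}

/-- `I` is generated in a single degree. -/
def GeneratedInSingleDegree {n : ℕ} (I : Set (Mon n)) : Prop :=
  ∃ d, ∀ u ∈ minGens I, degree u = d

/-- A polymatroidal ideal: generated in a single degree and its generators satisfy the
exchange property. -/
def IsPolymatroidal {n : ℕ} (I : Set (Mon n)) : Prop :=
  GeneratedInSingleDegree I ∧
  ∀ u ∈ minGens I, ∀ v ∈ minGens I, ∀ i : Fin n, v i < u i →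
    ∃ j : Fin n, u j < v j ∧ exch u i j ∈ I

/-- Componentwise polymatroidal: each graded component ideal `I_⟨d⟩` is polymatroidal. -/
def ComponentwisePolymatroidal {n : ℕ} (I : Set (Mon n)) : Prop :=
  ∀ d : ℕ, IsPolymatroidal (component I d)

/-- Non-pure dual exchange property: for `u, v ∈ G(I)` with `deg u ≤ deg v` and
`deg_{x_i} v < deg_{x_i} u` there is `j` with `deg_{x_j} v > deg_{x_j} u` and
`x_i * (v / x_j) ∈ I`. -/
def NonPureDualExchange {n : ℕ} (I : Set (Mon n)) : Prop :=
  ∀ u ∈ minGens I, ∀ v ∈ minGens I, degree u ≤ degree v →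
    ∀ i : Fin n, v i < u i → ∃ j : Fin n, u j < v j ∧ exch v j i ∈ I

/-- Non-pure exchange property: for `u, v ∈ G(I)` with `deg u ≤ deg v` and
`deg_{x_i} v > deg_{x_i} u` there is `j` with `deg_{x_j} v < deg_{x_j} u` and
`x_j * (v / x_i) ∈ I`. -/
def NonPureExchange {n : ℕ} (I : Set (Mon n)) : Prop :=
  ∀ u ∈ minGens I, ∀ v ∈ minGens I, degree u ≤ degree v →
    ∀ i : Fin n, u i < v i → ∃ j : Fin n, v j < u j ∧ exch v i j ∈ I

/-- The monomial ideal generated by a set `G` of monomials. -/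
def genBy {n : ℕ} (G : Set (Mon n)) : Set (Mon n) := {w | ∃ u ∈ G, u ≤ w}

/-- The product of two monomial ideals (as sets of monomials). -/
def mulIdeal {n : ℕ} (I J : Set (Mon n)) : Set (Mon n) :=
  {w | ∃ u ∈ I, ∃ v ∈ J, w = u + v}

/-- The product of a monomial ideal with the monomial `u`. -/
def mulMon {n : ℕ} (u : Mon n) (I : Set (Mon n)) : Set (Mon n) :=
  (fun v => u + v) '' I

/-- Strong exchange property: for all generators `u, v` and all `i, j` with
`deg_{x_i} u > deg_{x_i} v` and `deg_{x_j} u < deg_{x_j} v`, `x_j * (u / x_i) ∈ I`. -/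
def StrongExchange {n : ℕ} (I : Set (Mon n)) : Prop :=
  ∀ u ∈ minGens I, ∀ v ∈ minGens I, ∀ i j : Fin n,
    v i < u i → u j < v j → exch u i j ∈ I

/-- The Veronese type ideal `I_{(d; a_1,...,a_n)}`: generated by all monomials of
degree `d` with `deg_{x_i} ≤ a i` for all `i`. -/
def veronese (n d : ℕ) (a : Fin n → ℕ) : Set (Mon n) :=
  {w | ∃ u : Mon n, degree u = d ∧ (∀ i, u i ≤ a i) ∧ u ≤ w}

/-- A list of monomials is an admissible order if each colon ideal
`(u_1,...,u_{i-1}) : u_i` is generated by a subset `S` of the variables. -/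
def AdmissibleOrder {n : ℕ} (L : List (Mon n)) : Prop :=
  ∀ i : Fin L.length, ∃ S : Set (Fin n),
    ∀ w : Mon n, (w + L.get i ∈ genBy {u | u ∈ L.take i.1}) ↔ ∃ k ∈ S, 1 ≤ w k

/-- `I` has linear quotients: some ordering of `G(I)` is admissible. -/
def HasLinearQuotients {n : ℕ} (I : Set (Mon n)) : Prop :=
  ∃ L : List (Mon n), L.Nodup ∧ (∀ u, u ∈ L ↔ u ∈ minGens I) ∧ AdmissibleOrder L

/-- `I` can be extended by linear quotients to `J`: `G(I) ⊆ G(J)` and the elements of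
`G(J) \ G(I)` can be ordered `v_1,...,v_m` such that each colon ideal
`(G(I), v_1,...,v_i) : v_{i+1}` is generated by a subset of the variables. -/
def ExtendsByLinearQuotients {n : ℕ} (I J : Set (Mon n)) : Prop :=
  I ⊆ J ∧ minGens I ⊆ minGens J ∧
  ∃ L : List (Mon n), L.Nodup ∧ (∀ u, u ∈ L ↔ u ∈ minGens J ∧ u ∉ minGens I) ∧
    ∀ i : Fin L.length, ∃ S : Set (Fin n),
      ∀ w : Mon n,
        (w + L.get i ∈ genBy (minGens I ∪ {u | u ∈ L.take i.1})) ↔ ∃ k ∈ S, 1 ≤ w k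

/-- The minimal generators of `I ⊆ K[x,y]` are `u_i = x^{a i} y^{b i}`, `i = 0,...,m`,
with `a` strictly decreasing, `b` strictly increasing, `a m = 0` and `b 0 = 0`
(so `I` is `(x,y)`-primary). -/
def yxTightGens (m : ℕ) (a b : ℕ → ℕ) (I : Set (Mon 2)) : Prop :=
  (∀ i k : ℕ, i ≤ m → k ≤ m → i < k → a k < a i ∧ b i < b k) ∧
  a m = 0 ∧ b 0 = 0 ∧
  minGens I = {u | ∃ i ≤ m, u = ![a i, b i]}

/-- `I` is `x`-tight in `[0, r]`: the `x`-exponents of the generators are exactly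
`r, r-1, ..., 1, 0` (i.e. `a (r - i) = i`). -/
def xTight (I : Set (Mon 2)) (r : ℕ) : Prop :=
  ∃ b : ℕ → ℕ, yxTightGens r (fun i => r - i) b I

/-- `I` is `y`-tight in `[0, s]`: the `y`-exponents of the generators are exactly
`0, 1, ..., s`. -/
def yTight (I : Set (Mon 2)) (s : ℕ) : Prop :=
  ∃ a : ℕ → ℕ, yxTightGens s a (fun i => i) I

/-- `I` is `yx`-tight: there is `0 ≤ j ≤ m` with `b i = i` for `i = 0,...,j` and
`a (m - i) = i` for `i = 0,...,m-j`. -/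
def yxTight (I : Set (Mon 2)) : Prop :=
  ∃ (m : ℕ) (a b : ℕ → ℕ), yxTightGens m a b I ∧
    ∃ j ≤ m, (∀ i ≤ j, b i = i) ∧ ∀ i ≤ m - j, a (m - i) = i

/-- Powers of a monomial ideal. -/
def powIdeal {n : ℕ} (I : Set (Mon n)) : ℕ → Set (Mon n)
  | 0 => Set.univ
  | k + 1 => mulIdeal (powIdeal I k) I

/-! The minimal generators of the product `I·J` are the sums `x^{(m-i)+(n-j)} y^{b i + b' j}`
minimizing the `y`-exponent among those with `i + j = k`; this min-plus convolution of two strictly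
increasing sequences is again strictly increasing, because an optimal pair for `k + 1` can be
lowered in one coordinate to a pair for `k`. -/

open Set

lemma IsMonomialIdeal.mem_of_le {n : ℕ} {I : Set (Mon n)} (hI : IsMonomialIdeal I) {u w : Mon n}
    (hu : u ∈ I) (huw : u ≤ w) : w ∈ I := by
  simpa [add_tsub_cancel_of_le huw] using hI u hu (w - u)

lemma exists_mem_minGens_le {n : ℕ} {I : Set (Mon n)} {w : Mon n} (hw : w ∈ I) :
    ∃ u ∈ minGens I, u ≤ w := by
  obtain ⟨u, huw, hmin⟩ := exists_minimal_le_of_wellFoundedLT (· ∈ I) w hw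
  exact ⟨u, ⟨hmin.prop, fun v hv hvu => hmin.eq_of_le hv hvu⟩, huw⟩

lemma mon2_le_iff (p q : ℕ) (w : Mon 2) : (![p, q] : Mon 2) ≤ w ↔ p ≤ w 0 ∧ q ≤ w 1 := by
  refine ⟨fun h => ⟨h 0, h 1⟩, fun ⟨h0, h1⟩ i => ?_⟩
  fin_cases i <;> simpa

/-- The monomial ideal of `K[x,y]` generated by `x^{a k} y^{c k}`, `k = 0,...,r`. -/
def staircase (r : ℕ) (a c : ℕ → ℕ) : Set (Mon 2) :=
  {w | ∃ k ≤ r, a k ≤ w 0 ∧ c k ≤ w 1}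

lemma mon2_mem_staircase {r k : ℕ} (a c : ℕ → ℕ) (hk : k ≤ r) : ![a k, c k] ∈ staircase r a c :=
  ⟨k, hk, by simp, by simp⟩

lemma IsMonomialIdeal.eq_staircase {I : Set (Mon 2)} (hI : IsMonomialIdeal I) {r : ℕ}
    {a c : ℕ → ℕ} (hgens : minGens I = {u | ∃ k ≤ r, u = ![a k, c k]}) :
    I = staircase r a c := by
  ext w
  constructor
  · intro hw
    obtain ⟨u, hu, huw⟩ := exists_mem_minGens_le hw
    rw [hgens] at hu
    obtain ⟨k, hk, rfl⟩ := hu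
    exact ⟨k, hk, (mon2_le_iff _ _ w).1 huw⟩
  · rintro ⟨k, hk, hw⟩
    have hgen : ![a k, c k] ∈ minGens I := hgens ▸ ⟨k, hk, rfl⟩
    exact hI.mem_of_le hgen.1 ((mon2_le_iff _ _ w).2 hw)

lemma minGens_staircase {r : ℕ} {a c : ℕ → ℕ} (ha : StrictAntiOn a (Iic r))
    (hc : StrictMonoOn c (Iic r)) :
    minGens (staircase r a c) = {u | ∃ k ≤ r, u = ![a k, c k]} := by
  ext u
  constructor
  · rintro ⟨⟨k, hk, hu⟩, hmin⟩
    exact ⟨k, hk, (hmin _ (mon2_mem_staircase a c hk) ((mon2_le_iff _ _ u).2 hu)).symm⟩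
  · rintro ⟨k, hk, rfl⟩
    refine ⟨mon2_mem_staircase a c hk, fun v ⟨l, hl, hv0, hv1⟩ hvu => ?_⟩
    have hlk : l = k := le_antisymm
      ((hc.le_iff_le hl hk).1 (hv1.trans (by simpa using hvu 1)))
      ((ha.le_iff_ge hl hk).1 (hv0.trans (by simpa using hvu 0)))
    subst hlk
    exact le_antisymm hvu ((mon2_le_iff _ _ v).2 ⟨hv0, hv1⟩)

lemma yxTightGens_staircase {r : ℕ} {a c : ℕ → ℕ} (ha : StrictAntiOn a (Iic r))
    (hc : StrictMonoOn c (Iic r)) (har : a r = 0) (hc0 : c 0 = 0) :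
    yxTightGens r a c (staircase r a c) :=
  ⟨fun _ _ hi hk hik => ⟨ha hi hk hik, hc hi hk hik⟩, har, hc0, minGens_staircase ha hc⟩

lemma yxTightGens.strictMonoOn {m : ℕ} {a b : ℕ → ℕ} {I : Set (Mon 2)}
    (h : yxTightGens m a b I) : StrictMonoOn b (Iic m) :=
  fun _ hi _ hk hik => (h.1 _ _ hi hk hik).2

lemma mem_mulIdeal_staircase {m n : ℕ} {a b a' b' : ℕ → ℕ} {w : Mon 2} :
    w ∈ mulIdeal (staircase m a b) (staircase n a' b') ↔
      ∃ i ≤ m, ∃ j ≤ n, a i + a' j ≤ w 0 ∧ b i + b' j ≤ w 1 := by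
  constructor
  · rintro ⟨u, ⟨i, hi, hu0, hu1⟩, v, ⟨j, hj, hv0, hv1⟩, rfl⟩
    exact ⟨i, hi, j, hj, add_le_add hu0 hv0, add_le_add hu1 hv1⟩
  · rintro ⟨i, hi, j, hj, h0, h1⟩
    have hle : ![a i, b i] ≤ w := (mon2_le_iff _ _ w).2 ⟨by omega, by omega⟩
    refine ⟨_, mon2_mem_staircase a b hi, w - ![a i, b i], ⟨j, hj, ?_, ?_⟩,
      (add_tsub_cancel_of_le hle).symm⟩ <;> simp <;> omega

/-- Min-plus convolution of `b` on `[0, m]` and `b'` on `[0, n]`; it takes the junk value `0`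
when `m + n < k`. -/
noncomputable def minPlusConv (m n : ℕ) (b b' : ℕ → ℕ) (k : ℕ) : ℕ :=
  sInf {t | ∃ i ≤ m, ∃ j ≤ n, i + j = k ∧ t = b i + b' j}

section minPlusConv

variable {m n : ℕ} {b b' : ℕ → ℕ}

lemma minPlusConv_le {i j : ℕ} (hi : i ≤ m) (hj : j ≤ n) :
    minPlusConv m n b b' (i + j) ≤ b i + b' j :=
  Nat.sInf_le ⟨i, hi, j, hj, rfl, rfl⟩

lemma exists_minPlusConv_eq {k : ℕ} (hk : k ≤ m + n) :
    ∃ i ≤ m, ∃ j ≤ n, i + j = k ∧ minPlusConv m n b b' k = b i + b' j := by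
  refine Nat.sInf_mem (s := {t | ∃ i ≤ m, ∃ j ≤ n, i + j = k ∧ t = b i + b' j}) ?_
  rcases le_total k m with h | h
  · exact ⟨_, k, h, 0, Nat.zero_le n, add_zero k, rfl⟩
  · exact ⟨_, m, le_rfl, k - m, by omega, by omega, rfl⟩

lemma minPlusConv_zero : minPlusConv m n b b' 0 = b 0 + b' 0 := by
  obtain ⟨i, -, j, -, hij, h⟩ := exists_minPlusConv_eq (b := b) (b' := b') (Nat.zero_le (m + n))
  obtain ⟨rfl, rfl⟩ : i = 0 ∧ j = 0 := by omega
  exact h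

lemma minPlusConv_lt_succ (hb : StrictMonoOn b (Iic m)) (hb' : StrictMonoOn b' (Iic n))
    {k : ℕ} (hk : k < m + n) : minPlusConv m n b b' k < minPlusConv m n b b' (k + 1) := by
  obtain ⟨i, hi, j, hj, hij, h⟩ := exists_minPlusConv_eq (b := b) (b' := b') (Nat.succ_le_of_lt hk)
  rw [h]
  rcases Nat.eq_zero_or_pos i with rfl | hi0
  · calc minPlusConv m n b b' k = minPlusConv m n b b' (0 + (j - 1)) := by congr 1; omega
      _ ≤ b 0 + b' (j - 1) := minPlusConv_le (Nat.zero_le m) (by omega)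
      _ < b 0 + b' j := by
        gcongr
        exact hb' (show j - 1 ≤ n by omega) hj (by omega)
  · calc minPlusConv m n b b' k = minPlusConv m n b b' ((i - 1) + j) := by congr 1; omega
      _ ≤ b (i - 1) + b' j := minPlusConv_le (by omega) hj
      _ < b i + b' j := by
        gcongr
        exact hb (show i - 1 ≤ m by omega) hi (by omega)

lemma strictMonoOn_minPlusConv (hb : StrictMonoOn b (Iic m)) (hb' : StrictMonoOn b' (Iic n)) :
    StrictMonoOn (minPlusConv m n b b') (Iic (m + n)) :=
  strictMonoOn_Iic_of_lt_succ fun _ hk => minPlusConv_lt_succ hb hb' hk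

lemma mulIdeal_staircase_tsub :
    mulIdeal (staircase m (m - ·) b) (staircase n (n - ·) b') =
      staircase (m + n) (m + n - ·) (minPlusConv m n b b') := by
  ext w
  rw [mem_mulIdeal_staircase]
  constructor
  · rintro ⟨i, hi, j, hj, h0, h1⟩
    exact ⟨i + j, by omega, by dsimp only at h0 ⊢; omega, (minPlusConv_le hi hj).trans h1⟩
  · rintro ⟨k, hk, h0, h1⟩
    obtain ⟨i, hi, j, hj, rfl, h⟩ := exists_minPlusConv_eq (b := b) (b' := b') hk
    exact ⟨i, hi, j, hj, by dsimp only at h0 ⊢; omega, h ▸ h1⟩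

end minPlusConv

/-- if `I` is `x`-tight in `[0,m]` and `J` is `x`-tight in `[0,n]`, then
`I·J` is `x`-tight in `[0,m+n]`. -/
theorem stmt_13 (I J : Set (Mon 2)) (hI : IsMonomialIdeal I) (hJ : IsMonomialIdeal J)
    (m n : ℕ) (hxI : xTight I m) (hxJ : xTight J n) :
    xTight (mulIdeal I J) (m + n) := by
  obtain ⟨b, hb⟩ := hxI
  obtain ⟨b', hb'⟩ := hxJ
  rw [hI.eq_staircase hb.2.2.2, hJ.eq_staircase hb'.2.2.2, mulIdeal_staircase_tsub]
  refine ⟨minPlusConv m n b b', yxTightGens_staircase ?_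
    (strictMonoOn_minPlusConv hb.strictMonoOn hb'.strictMonoOn) (Nat.sub_self _) ?_⟩
  · intro i hi k hk hik
    simp only [mem_Iic] at hi hk
    dsimp only
    omega
  · rw [minPlusConv_zero, hb.2.2.1, hb'.2.2.1]
end

section
/- For each variable x_i, the ideal x_i·I_{(d; a_1,...,a_n)} can be extended by linear quotients to I_{(d+1; a_1,...,a_i+1,...,a_n)}. Consequently, for any nonnegative integers c_1,...,c_n, the ideal x_1^{c_1}···x_n^{c_n}·I_{(d; a_1,...,a_n)} can be extended by linear quotients to I_{(d + Σc_i; a_1+c_1,...,a_n+c_n)}. -/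
/-!
Adding to `x_i · I_{(d; a)}` the missing generators of `I_{(d+1; a + e_i)}`, namely the monomials
`v` of degree `d + 1` with `v ≤ a` and `deg_{x_i} v = 0`, in decreasing lexicographic order, every
colon ideal is generated by variables: an old generator is caught by `x_i`, since trading any of
the variables of `v` for `x_i` gives an old generator dividing `x_i v`; a lexicographically larger new
generator `g` is caught by `x_t`, where `t` is the first variable with `g_t > v_t`, since
`x_t v / x_s` is again a larger new generator for any `s` with `v_s > g_s` (necessarily `s > t`).
The general case is an induction on `c`, as extension by linear quotients is transitive and
preserved under multiplication by a monomial.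
-/

open Function

section

variable {α β : Type*}

lemma List.mem_take_iff_of_pairwise [LinearOrder β] {f : α → β} {L : List α}
    (hL : L.Pairwise fun x y => f y < f x) {k : ℕ} (hk : k < L.length) {u : α} :
    u ∈ L.take k ↔ u ∈ L ∧ f L[k] < f u := by
  constructor
  · intro hu
    obtain ⟨j, hj, rfl⟩ := List.mem_take_iff_getElem.1 hu
    exact ⟨List.getElem_mem _, List.pairwise_iff_getElem.1 hL j k _ hk (by omega)⟩
  · rintro ⟨hu, hlt⟩
    obtain ⟨j, hj, rfl⟩ := List.getElem_of_mem hu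
    refine List.mem_take_iff_getElem.2 ⟨j, ?_, rfl⟩
    by_contra hkj
    refine hlt.not_ge ?_
    rcases (show k ≤ j by omega).eq_or_lt with rfl | hkj
    · rfl
    · exact (List.pairwise_iff_getElem.1 hL k j hk hj hkj).le

lemma Set.Finite.exists_list_pairwise [LinearOrder β] {f : α → β}
    (hf : Injective f) {D : Set α} (hD : D.Finite) :
    ∃ L : List α, (∀ u, u ∈ L ↔ u ∈ D) ∧ L.Pairwise fun x y => f y < f x := by
  let := LinearOrder.lift' f hf
  exact ⟨hD.toFinset.sort (· ≥ ·), fun u => by simp, (Finset.sortedGT_sort _).pairwise⟩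

end

section

variable {n : ℕ}

lemma degree_add (u v : Mon n) : degree (u + v) = degree u + degree v :=
  Finset.sum_add_distrib

@[simp]
lemma degree_single (i : Fin n) (m : ℕ) : degree (Pi.single i m) = m := by
  simp [degree]

lemma degree_mono {u v : Mon n} (h : u ≤ v) : degree u ≤ degree v :=
  Finset.sum_le_sum fun i _ => h i

lemma degree_tsub {u v : Mon n} (h : u ≤ v) : degree (v - u) = degree v - degree u := by
  conv_rhs => rw [← tsub_add_cancel_of_le h, degree_add]
  omega

lemma eq_of_le_of_degree_le {u v : Mon n} (h : u ≤ v) (hd : degree v ≤ degree u) : u = v :=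
  funext fun i => (Finset.sum_eq_sum_iff_of_le fun j _ => h j).1
    (le_antisymm (degree_mono h) hd) i (Finset.mem_univ i)

lemma exists_pos_of_degree_pos {u : Mon n} (h : 0 < degree u) : ∃ i, 0 < u i := by
  by_contra! h'
  simp_all [degree]

lemma mem_minGens_veronese {d : ℕ} {a u : Mon n} :
    u ∈ minGens (veronese n d a) ↔ degree u = d ∧ u ≤ a := by
  constructor
  · rintro ⟨⟨g, hg, hga, hgu⟩, hmin⟩
    obtain rfl := hmin g ⟨g, hg, hga, le_rfl⟩ hgu
    exact ⟨hg, hga⟩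
  · rintro ⟨hu, hua⟩
    refine ⟨⟨u, hu, hua, le_rfl⟩, ?_⟩
    rintro v ⟨g, rfl, -, hgv⟩ hvu
    exact eq_of_le_of_degree_le hvu (hu ▸ degree_mono hgv)

lemma minGens_mulMon (c : Mon n) (I : Set (Mon n)) :
    minGens (mulMon c I) = (c + ·) '' minGens I := by
  ext x
  constructor
  · rintro ⟨⟨v, hv, rfl⟩, hmin⟩
    exact ⟨v, ⟨hv, fun v' hv' hle => add_left_cancel
      (hmin (c + v') ⟨v', hv', rfl⟩ (add_le_add_right hle c))⟩, rfl⟩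
  · rintro ⟨v, ⟨hv, hmin⟩, rfl⟩
    refine ⟨⟨v, hv, rfl⟩, ?_⟩
    rintro _ ⟨v', hv', rfl⟩ hle
    rw [hmin v' hv' (le_of_add_le_add_left hle)]

lemma mulMon_zero (I : Set (Mon n)) : mulMon 0 I = I := by
  simp [mulMon]

lemma mulMon_mulMon (u w : Mon n) (I : Set (Mon n)) :
    mulMon u (mulMon w I) = mulMon (u + w) I := by
  simp only [mulMon, Set.image_image, add_assoc]

lemma add_mem_genBy_image_add_iff (c : Mon n) (G : Set (Mon n)) (y : Mon n) :
    c + y ∈ genBy ((c + ·) '' G) ↔ y ∈ genBy G := by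
  constructor
  · rintro ⟨_, ⟨g, hg, rfl⟩, hle⟩
    exact ⟨g, hg, le_of_add_le_add_left hle⟩
  · rintro ⟨g, hg, hle⟩
    exact ⟨c + g, ⟨g, hg, rfl⟩, add_le_add_right hle c⟩

/-- The colon ideal `(G) : v` is generated by variables. -/
def IsLinearColon (G : Set (Mon n)) (v : Mon n) : Prop :=
  ∃ S : Set (Fin n), ∀ w : Mon n, w + v ∈ genBy G ↔ ∃ k ∈ S, 1 ≤ w k

lemma isLinearColon_of_forall_exists {G : Set (Mon n)} {v : Mon n}
    (h : ∀ g ∈ G, ∃ t, v t < g t ∧ Pi.single t 1 + v ∈ genBy G) : IsLinearColon G v := by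
  refine ⟨{t | Pi.single t 1 + v ∈ genBy G}, fun w => ⟨?_, ?_⟩⟩
  · rintro ⟨g, hg, hgw⟩
    obtain ⟨t, hvg, ht⟩ := h g hg
    exact ⟨t, ht, by have := hgw t; simp only [Pi.add_apply] at this; omega⟩
  · rintro ⟨t, ⟨g, hg, hgt⟩, hwt⟩
    refine ⟨g, hg, hgt.trans (add_le_add_left (fun j => ?_) v)⟩
    rcases eq_or_ne j t with rfl | hj
    · simpa using hwt
    · simp [hj]

lemma IsLinearColon.image_add {G : Set (Mon n)} {v : Mon n} (c : Mon n) (h : IsLinearColon G v) :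
    IsLinearColon ((c + ·) '' G) (c + v) := by
  obtain ⟨S, hS⟩ := h
  refine ⟨S, fun w => ?_⟩
  rw [add_left_comm, add_mem_genBy_image_add_iff, hS]

namespace ExtendsByLinearQuotients

theorem of_injective {β : Type*} [LinearOrder β] {f : Mon n → β} (hf : Injective f)
    {I J : Set (Mon n)} (hIJ : I ⊆ J) (hG : minGens I ⊆ minGens J)
    (hfin : (minGens J \ minGens I).Finite)
    (hcolon : ∀ v ∈ minGens J \ minGens I,
      IsLinearColon (minGens I ∪ {u | u ∈ minGens J \ minGens I ∧ f v < f u}) v) :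
    ExtendsByLinearQuotients I J := by
  obtain ⟨L, hL, hsort⟩ := hfin.exists_list_pairwise hf
  refine ⟨hIJ, hG, L, hsort.imp fun h hxy => by subst hxy; exact lt_irrefl _ h,
    fun u => hL u, fun ⟨k, hk⟩ => ?_⟩
  have htake : {u | u ∈ L.take k} = {u | u ∈ minGens J \ minGens I ∧ f L[k] < f u} := by
    ext u
    simp only [Set.mem_ofPred_eq, List.mem_take_iff_of_pairwise hsort hk, hL]
  show IsLinearColon _ _
  rw [htake]
  exact hcolon _ ((hL _).1 (List.getElem_mem hk))

protected theorem refl (I : Set (Mon n)) : ExtendsByLinearQuotients I I :=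
  ⟨le_rfl, le_rfl, [], List.nodup_nil, by simp, fun ⟨_, hi⟩ => absurd hi (Nat.not_lt_zero _)⟩

theorem trans {A B C : Set (Mon n)} (h₁ : ExtendsByLinearQuotients A B)
    (h₂ : ExtendsByLinearQuotients B C) : ExtendsByLinearQuotients A C := by
  obtain ⟨hAB, hGAB, L₁, hn₁, hm₁, hc₁⟩ := h₁
  obtain ⟨hBC, hGBC, L₂, hn₂, hm₂, hc₂⟩ := h₂
  have hB : minGens A ∪ {u | u ∈ L₁} = minGens B := by
    ext u
    simp only [Set.mem_union, Set.mem_ofPred_eq, hm₁]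
    by_cases hu : u ∈ minGens A
    · simp [hu, hGAB hu]
    · simp [hu]
  refine ⟨hAB.trans hBC, hGAB.trans hGBC, L₁ ++ L₂,
    hn₁.append hn₂ fun u hu₁ hu₂ => ((hm₂ u).1 hu₂).2 ((hm₁ u).1 hu₁).1, fun u => ?_,
    fun ⟨i, hi⟩ => ?_⟩
  · simp only [List.mem_append, hm₁, hm₂]
    by_cases hu : u ∈ minGens B
    · simp [hu, hGBC hu]
    · simpa [hu] using fun _ hA => hu (hGAB hA)
  · by_cases hi₁ : i < L₁.length
    · simpa [List.getElem_append_left hi₁, List.take_append_of_le_length hi₁.le] using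
        hc₁ ⟨i, hi₁⟩
    · push Not at hi₁
      have hi₂ : i - L₁.length < L₂.length := by simp at hi; omega
      have hsets : minGens A ∪ {u | u ∈ (L₁ ++ L₂).take i}
          = minGens B ∪ {u | u ∈ L₂.take (i - L₁.length)} := by
        rw [List.take_append, List.take_of_length_le hi₁, ← hB]
        ext u
        simp only [Set.mem_union, List.mem_append, Set.mem_ofPred_eq, or_assoc]
      simpa [List.getElem_append_right hi₁, hsets] using hc₂ ⟨i - L₁.length, hi₂⟩

theorem mulMon {A B : Set (Mon n)} (c : Mon n) (h : ExtendsByLinearQuotients A B) :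
    ExtendsByLinearQuotients (_root_.mulMon c A) (_root_.mulMon c B) := by
  obtain ⟨hAB, hGAB, L, hn, hm, hc⟩ := h
  have hinj : Injective (c + · : Mon n → Mon n) := add_right_injective c
  refine ⟨Set.image_mono hAB, ?_, L.map (c + ·), hn.map hinj, fun u => ?_, fun ⟨i, hi⟩ => ?_⟩
  · simpa only [minGens_mulMon] using Set.image_mono hGAB
  · simp only [List.mem_map, minGens_mulMon, Set.mem_image]
    constructor
    · rintro ⟨v, hv, rfl⟩
      exact ⟨⟨v, ((hm v).1 hv).1, rfl⟩, fun ⟨v', hv', he⟩ => ((hm v).1 hv).2 (hinj he ▸ hv')⟩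
    · rintro ⟨⟨v, hv, rfl⟩, hA⟩
      exact ⟨v, (hm v).2 ⟨hv, fun h => hA ⟨v, h, rfl⟩⟩, rfl⟩
  · have hi' : i < L.length := by simpa using hi
    have hsets : minGens (_root_.mulMon c A) ∪ {u | u ∈ (L.map (c + ·)).take i}
        = (c + ·) '' (minGens A ∪ {u | u ∈ L.take i}) := by
      rw [minGens_mulMon, Set.image_union]
      ext u
      simp [← List.map_take]
    show IsLinearColon _ _
    simpa [hsets] using IsLinearColon.image_add c (hc ⟨i, hi'⟩)

end ExtendsByLinearQuotients

lemma single_one_le_iff {v : Mon n} {i : Fin n} : Pi.single i 1 ≤ v ↔ 1 ≤ v i := by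
  rw [Pi.single, update_le_iff]
  simp

lemma update_add_one_eq_add_single (f : Mon n) (i : Fin n) :
    update f i (f i + 1) = f + Pi.single i 1 := by
  ext j
  rcases eq_or_ne j i with rfl | h <;> simp [*]

section Exch

variable {v a : Mon n} {s t : Fin n}

lemma exch_add_single (hst : s ≠ t) (hs : 1 ≤ v s) :
    exch v s t + Pi.single s 1 = v + Pi.single t 1 := by
  ext j
  rcases eq_or_ne j s with rfl | hjs
  · simp [exch, hst]; omega
  · rcases eq_or_ne j t with rfl | hjt <;> simp [exch, *]

lemma degree_exch (hst : s ≠ t) (hs : 1 ≤ v s) : degree (exch v s t) = degree v := by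
  have := congrArg degree (exch_add_single hst hs)
  simpa [degree_add] using this

lemma exch_le_single_add : exch v s t ≤ Pi.single t 1 + v := by
  intro j
  by_cases j = s <;> by_cases j = t <;> simp_all [exch]
  all_goals omega

lemma exch_le (hv : v ≤ a) (ht : v t < a t) : exch v s t ≤ a := by
  intro j
  have := hv j
  by_cases j = s <;> by_cases j = t <;> simp_all [exch]
  all_goals omega

lemma exch_apply_of_ne {j : Fin n} (hs : j ≠ s) (ht : j ≠ t) : exch v s t j = v j := by
  simp [exch, hs, ht]

lemma toLex_lt_exch (hts : t < s) : toLex v < toLex (exch v s t) :=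
  ⟨t, fun j hj => (exch_apply_of_ne (hj.trans hts).ne hj.ne).symm, by simp [exch, hts.ne]⟩

end Exch

lemma exists_lt_of_toLex_lt {u v : Mon n} (hdeg : degree u = degree v) (h : toLex v < toLex u) :
    ∃ t s, t < s ∧ v t < u t ∧ u s < v s := by
  obtain ⟨t, heq, hlt⟩ := h
  obtain ⟨s, hs⟩ : ∃ s, u s < v s := by
    by_contra! hle
    exact hlt.ne (congrFun (eq_of_le_of_degree_le hle hdeg.le) t)
  refine ⟨t, s, lt_of_le_of_ne (not_lt.1 fun hst => ?_) ?_, hlt, hs⟩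
  · exact hs.ne (heq s hst).symm
  · rintro rfl; exact (hs.trans hlt).false

section Veronese

variable {d : ℕ} {a : Mon n} {i : Fin n}

lemma single_add_le_update {u : Mon n} (hu : u ≤ a) :
    Pi.single i 1 + u ≤ update a i (a i + 1) := by
  rw [update_add_one_eq_add_single, add_comm]
  exact add_le_add_left hu _

lemma mulMon_single_veronese_subset :
    mulMon (Pi.single i 1) (veronese n d a) ⊆ veronese n (d + 1) (update a i (a i + 1)) := by
  rintro _ ⟨w, ⟨u, hu, hua, huw⟩, rfl⟩
  exact ⟨Pi.single i 1 + u, by simp [degree_add, hu, add_comm], single_add_le_update hua,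
    add_le_add_right huw _⟩

lemma minGens_mulMon_single_veronese_subset :
    minGens (mulMon (Pi.single i 1) (veronese n d a)) ⊆
      minGens (veronese n (d + 1) (update a i (a i + 1))) := by
  rw [minGens_mulMon]
  rintro _ ⟨u, hu, rfl⟩
  rw [mem_minGens_veronese] at hu ⊢
  exact ⟨by simp [degree_add, hu.1, add_comm], single_add_le_update hu.2⟩

lemma minGens_veronese_diff_mulMon_single :
    minGens (veronese n (d + 1) (update a i (a i + 1))) \
        minGens (mulMon (Pi.single i 1) (veronese n d a)) =
      {v | degree v = d + 1 ∧ v ≤ a ∧ v i = 0} := by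
  ext v
  simp only [Set.mem_sdiff, mem_minGens_veronese, minGens_mulMon, Set.mem_image,
    le_update_iff, Set.mem_ofPred_eq]
  constructor
  · rintro ⟨⟨hdeg, hvi, hva⟩, hnot⟩
    have hv0 : v i = 0 := by
      by_contra h
      have hle : Pi.single i 1 ≤ v := single_one_le_iff.2 (by omega)
      refine hnot ⟨v - Pi.single i 1, ⟨by simp [degree_tsub hle, hdeg], fun j => ?_⟩,
        add_tsub_cancel_of_le hle⟩
      rcases eq_or_ne j i with rfl | hj
      · simp; omega
      · simp [hj, hva j hj]
    refine ⟨hdeg, fun j => ?_, hv0⟩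
    rcases eq_or_ne j i with rfl | hj
    · simp [hv0]
    · exact hva j hj
  · rintro ⟨hdeg, hva, hvi⟩
    refine ⟨⟨hdeg, by omega, fun j _ => hva j⟩, ?_⟩
    rintro ⟨u, -, rfl⟩
    simp at hvi

lemma isLinearColon_mulMon_single_veronese_lex {v : Mon n} (hdeg : degree v = d + 1)
    (hva : v ≤ a) (hvi : v i = 0) :
    IsLinearColon (minGens (mulMon (Pi.single i 1) (veronese n d a)) ∪
      {u | (degree u = d + 1 ∧ u ≤ a ∧ u i = 0) ∧ toLex v < toLex u}) v := by
  apply isLinearColon_of_forall_exists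
  rintro g (hg | ⟨⟨hgdeg, hga, hgi⟩, hlt⟩)
  · rw [minGens_mulMon] at hg
    obtain ⟨u, hu, rfl⟩ := hg
    obtain ⟨s, hs⟩ := exists_pos_of_degree_pos (by omega : 0 < degree v)
    have hsv : Pi.single s 1 ≤ v := single_one_le_iff.2 hs
    have hmem : Pi.single i 1 + (v - Pi.single s 1) ∈
        minGens (mulMon (Pi.single i 1) (veronese n d a)) := by
      rw [minGens_mulMon]
      refine ⟨_, ?_, rfl⟩
      rw [mem_minGens_veronese]
      exact ⟨by simp [degree_tsub hsv, hdeg], tsub_le_self.trans hva⟩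
    exact ⟨i, by simp [hvi], _, Or.inl hmem, add_le_add_right tsub_le_self _⟩
  · obtain ⟨t, s, hts, hvt, hgs⟩ := exists_lt_of_toLex_lt (hgdeg.trans hdeg.symm) hlt
    have his : i ≠ s := by rintro rfl; omega
    have hit : i ≠ t := by rintro rfl; omega
    refine ⟨t, hvt, exch v s t, Or.inr ⟨⟨?_, exch_le hva (hvt.trans_le (hga t)), ?_⟩,
      toLex_lt_exch hts⟩, exch_le_single_add⟩
    · rw [degree_exch hts.ne' (by omega), hdeg]
    · rw [exch_apply_of_ne his hit, hvi]

theorem extendsByLinearQuotients_mulMon_single_veronese (d : ℕ) (a : Mon n) (i : Fin n) :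
    ExtendsByLinearQuotients (mulMon (Pi.single i 1) (veronese n d a))
      (veronese n (d + 1) (update a i (a i + 1))) := by
  refine .of_injective toLex.injective mulMon_single_veronese_subset
    minGens_mulMon_single_veronese_subset ?_ ?_ <;> rw [minGens_veronese_diff_mulMon_single]
  · exact (Set.finite_Iic a).subset fun v hv => hv.2.1
  · exact fun v hv => isLinearColon_mulMon_single_veronese_lex hv.1 hv.2.1 hv.2.2

end Veronese

theorem Mon.induction_on {p : Mon n → Prop} (c : Mon n) (zero : p 0)
    (single_add : ∀ i c, p c → p (Pi.single i 1 + c)) : p c := by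
  induction h : degree c generalizing c with
  | zero => rwa [← eq_of_le_of_degree_le (zero_le : 0 ≤ c) (by rw [h]; exact Nat.zero_le _)]
  | succ m ih =>
    obtain ⟨i, hi⟩ := exists_pos_of_degree_pos (by omega : 0 < degree c)
    have hle : Pi.single i 1 ≤ c := single_one_le_iff.2 hi
    rw [← add_tsub_cancel_of_le hle]
    exact single_add i _ (ih _ (by simp [degree_tsub hle, h]))

theorem extendsByLinearQuotients_mulMon_veronese (d : ℕ) (a c : Mon n) :
    ExtendsByLinearQuotients (mulMon c (veronese n d a)) (veronese n (d + degree c) (a + c)) := by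
  induction c using Mon.induction_on with
  | zero => simpa [mulMon_zero, degree] using .refl _
  | single_add i c ih =>
    have h := (ih.mulMon (Pi.single i 1)).trans
      (extendsByLinearQuotients_mulMon_single_veronese (d + degree c) (a + c) i)
    have hdeg : d + degree c + 1 = d + degree (Pi.single i 1 + c) := by
      rw [degree_add, degree_single]
      omega
    rwa [mulMon_mulMon, update_add_one_eq_add_single, hdeg, add_assoc, add_comm c] at h

end

theorem stmt_14_general (n d : ℕ) (a : Fin n → ℕ) :
    (∀ i : Fin n,
      ExtendsByLinearQuotients (mulMon (Pi.single i 1) (veronese n d a))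
        (veronese n (d + 1) (Function.update a i (a i + 1)))) ∧
    (∀ c : Mon n,
      ExtendsByLinearQuotients (mulMon c (veronese n d a))
        (veronese n (d + degree c) (fun i => a i + c i))) :=
  ⟨extendsByLinearQuotients_mulMon_single_veronese d a,
    extendsByLinearQuotients_mulMon_veronese d a⟩

/-- `x_i · I_{(d;a)}` extends by linear quotients to
`I_{(d+1; a_1,...,a_i+1,...,a_n)}`; consequently `x_1^{c_1}···x_n^{c_n} · I_{(d;a)}`
extends by linear quotients to `I_{(d+Σc_i; a+c)}`. -/
theorem stmt_14 (n d : ℕ) (a : Fin n → ℕ) (hd : 0 < d) (ha : ∀ i, 0 < a i) :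
    (∀ i : Fin n,
      ExtendsByLinearQuotients (mulMon (Pi.single i 1) (veronese n d a))
        (veronese n (d + 1) (Function.update a i (a i + 1)))) ∧
    (∀ c : Mon n,
      ExtendsByLinearQuotients (mulMon c (veronese n d a))
        (veronese n (d + degree c) (fun i => a i + c i))) :=
  stmt_14_general n d a
end
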